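/- arXiv:2408.05806 — 4 statements merged into one kernel-verified Lean document; each statement's English description precedes it below -/
import Mathlib

section
/- Let x_{i-1}, x_i, x_{i+1} ∈ ℝ³, v_i ∈ ℝ³ with v_i ≠ 0, and suppose the point p(k) = x_i + k·v_i satisfies p(k) ≠ x_{i-1} and p(k) ≠ x_{i+1} for all k in some open interval I containing 0. If k = 0 minimizes J(k) = ‖p(k) - x_{i-1}‖ + ‖p(k) - x_{i+1}‖ over I, then cos θ_{i-1} + cos θ_{i+1} = 0, where θ_{i-1} and θ_{i+1} are the angles that v_i makes with x_i - x_{i-1} and x_i - x_{i+1} respectively. -/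
open InnerProductGeometry

private lemma norm_deriv_aux (xi xq v : EuclideanSpace ℝ (Fin 3)) (h : xi - xq ≠ 0) :
    HasDerivAt (fun k : ℝ => ‖(xi + k • v) - xq‖)
      (inner ℝ (xi - xq) v / ‖xi - xq‖) 0 := by
  have hf : HasDerivAt (fun k : ℝ => (xi + k • v) - xq) v 0 := by
    simpa using (((hasDerivAt_id (0:ℝ)).smul_const v).const_add xi).sub_const xq
  have hin : HasDerivAt (fun k : ℝ => (inner ℝ ((xi + k • v) - xq) ((xi + k • v) - xq) : ℝ))
      (2 * inner ℝ (xi - xq) v) 0 := by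
    have := hf.inner ℝ hf
    simp only [zero_smul, add_zero] at this
    refine this.congr_deriv ?_
    rw [real_inner_comm]
    ring
  have hpos : (inner ℝ (xi - xq) (xi - xq) : ℝ) ≠ 0 :=
    fun h' => h (inner_self_eq_zero.mp h')
  have hpos' : (inner ℝ ((xi + (0:ℝ) • v) - xq) ((xi + (0:ℝ) • v) - xq) : ℝ) ≠ 0 := by
    rw [zero_smul, add_zero]; exact hpos
  have hsqrt := (Real.hasDerivAt_sqrt hpos').comp 0 hin
  have heq : (fun k : ℝ => ‖(xi + k • v) - xq‖)
      = (Real.sqrt ∘ fun k : ℝ => (inner ℝ ((xi + k • v) - xq) ((xi + k • v) - xq) : ℝ)) := by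
    funext k
    rw [Function.comp_apply, real_inner_self_eq_norm_sq, Real.sqrt_sq (norm_nonneg _)]
  rw [heq]
  refine hsqrt.congr_deriv ?_
  have hs0 : Real.sqrt (inner ℝ (xi + (0:ℝ) • v - xq) (xi + (0:ℝ) • v - xq) : ℝ) = ‖xi - xq‖ := by
    rw [real_inner_self_eq_norm_sq, Real.sqrt_sq (norm_nonneg _), zero_smul, add_zero]
  rw [hs0]
  field_simp

/-- The "folded paper" property: if `k = 0` minimizes
`J k = ‖(xᵢ + k•vᵢ) - xᵢ₋₁‖ + ‖(xᵢ + k•vᵢ) - xᵢ₊₁‖` over an open interval `I` containing 0,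
and the moving point avoids `xᵢ₋₁` and `xᵢ₊₁` on `I`, then
`cos θᵢ₋₁ + cos θᵢ₊₁ = 0` for the angles that `vᵢ` makes with `xᵢ - xᵢ₋₁` and `xᵢ - xᵢ₊₁`. -/
theorem taut_path_supplementary_angles (xp xi xn v : EuclideanSpace ℝ (Fin 3)) (hv : v ≠ 0)
    (a b : ℝ) (ha : a < 0) (hb : 0 < b)
    (hp : ∀ k ∈ Set.Ioo a b, xi + k • v ≠ xp ∧ xi + k • v ≠ xn)
    (hmin : IsMinOn (fun k : ℝ => ‖(xi + k • v) - xp‖ + ‖(xi + k • v) - xn‖)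
      (Set.Ioo a b) 0) :
    Real.cos (InnerProductGeometry.angle v (xi - xp)) +
      Real.cos (InnerProductGeometry.angle v (xi - xn)) = 0 := by
  obtain ⟨h1, h2⟩ := hp 0 ⟨ha, hb⟩
  have hp1 : xi - xp ≠ 0 := by
    intro h; apply h1; simpa [sub_eq_zero] using h
  have hp2 : xi - xn ≠ 0 := by
    intro h; apply h2; simpa [sub_eq_zero] using h
  have hd : HasDerivAt (fun k : ℝ => ‖(xi + k • v) - xp‖ + ‖(xi + k • v) - xn‖)
      (inner ℝ (xi - xp) v / ‖xi - xp‖ + inner ℝ (xi - xn) v / ‖xi - xn‖) 0 :=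
    (norm_deriv_aux xi xp v hp1).add (norm_deriv_aux xi xn v hp2)
  have hloc : IsLocalMin (fun k : ℝ => ‖(xi + k • v) - xp‖ + ‖(xi + k • v) - xn‖) 0 :=
    hmin.isLocalMin (isOpen_Ioo.mem_nhds ⟨ha, hb⟩)
  have hzero := hloc.hasDerivAt_eq_zero hd
  rw [cos_angle, cos_angle]
  have hvn : ‖v‖ ≠ 0 := norm_ne_zero_iff.mpr hv
  have hn1 : ‖xi - xp‖ ≠ 0 := norm_ne_zero_iff.mpr hp1
  have hn2 : ‖xi - xn‖ ≠ 0 := norm_ne_zero_iff.mpr hp2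
  rw [real_inner_comm v (xi - xp), real_inner_comm v (xi - xn)] at hzero
  field_simp at hzero ⊢
  linear_combination hzero
end

section
/- Let x_T, x, x' ∈ ℝ² be points with x ≠ x_T and x' ≠ x_T. Define θ̂_t = atan2(x_T - x') and θ̂_t' = atan2(x_T - x) (the directions to the target from two consecutive trace positions), and suppose the segment from x to x' does not pass through x_T. Then the angular change ϑ_t = the constrained difference ⌊θ̂_t - θ̂_t'⌋ (wrapped to [-π, π)) satisfies |ϑ_t| < π. -/
/-- The angle of a planar vector with the positive x-axis, in `(-π, π]`. -/
noncomputable def atan2v (v : ℝ × ℝ) : ℝ := Complex.arg ⟨v.1, v.2⟩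

/-- Wraps an angle into `[-π, π)`. -/
noncomputable def wrapAngle (α : ℝ) : ℝ :=
  α - 2 * Real.pi * (⌊(α + Real.pi) / (2 * Real.pi)⌋ : ℝ)

lemma wrapAngle_mem (α : ℝ) : -Real.pi ≤ wrapAngle α ∧ wrapAngle α < Real.pi := by
  have hπ : (0:ℝ) < Real.pi := Real.pi_pos
  have h2π : (0:ℝ) < 2 * Real.pi := by linarith
  set y := (α + Real.pi) / (2 * Real.pi) with hy
  have h1 : (⌊y⌋ : ℝ) ≤ y := Int.floor_le y
  have h2 : y < ⌊y⌋ + 1 := Int.lt_floor_add_one y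
  have hy' : y * (2 * Real.pi) = α + Real.pi := div_mul_cancel₀ _ (ne_of_gt h2π)
  have h1' : (⌊y⌋ : ℝ) * (2*Real.pi) ≤ α + Real.pi := by
    rw [← hy']; exact mul_le_mul_of_nonneg_right h1 (le_of_lt h2π)
  have h2' : α + Real.pi < ((⌊y⌋ : ℝ) + 1) * (2*Real.pi) := by
    rw [← hy']; exact mul_lt_mul_of_pos_right h2 h2π
  unfold wrapAngle
  constructor <;> [nlinarith; nlinarith]

/-- In the target-pledge algorithm, the wrapped per-edge change of the direction toward the
target point is strictly less than `π` in absolute value whenever the traced edge avoids the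
target point. -/
theorem target_direction_change_lt_pi (xT x x' : ℝ × ℝ)
    (hx : x ≠ xT) (hx' : x' ≠ xT)
    (hseg : ∀ s ∈ segment ℝ x x', s ≠ xT) :
    |wrapAngle (atan2v (xT - x') - atan2v (xT - x))| < Real.pi := by
  set A : ℂ := ⟨(xT - x').1, (xT - x').2⟩ with hA
  set B : ℂ := ⟨(xT - x).1, (xT - x).2⟩ with hB
  have hA0 : A ≠ 0 := by
    intro h
    apply hx'
    have h1 : (xT - x').1 = 0 := congrArg Complex.re h
    have h2 : (xT - x').2 = 0 := congrArg Complex.im h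
    have : xT.1 - x'.1 = 0 ∧ xT.2 - x'.2 = 0 := ⟨h1, h2⟩
    ext <;> [linarith [this.1]; linarith [this.2]]
  have hB0 : B ≠ 0 := by
    intro h
    apply hx
    have h1 : (xT - x).1 = 0 := congrArg Complex.re h
    have h2 : (xT - x).2 = 0 := congrArg Complex.im h
    have : xT.1 - x.1 = 0 ∧ xT.2 - x.2 = 0 := ⟨h1, h2⟩
    ext <;> [linarith [this.1]; linarith [this.2]]
  set α : ℝ := atan2v (xT - x') - atan2v (xT - x) with hα
  obtain ⟨hmem1, hmem2⟩ := wrapAngle_mem α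
  rw [abs_lt]
  refine ⟨lt_of_le_of_ne hmem1 ?_, hmem2⟩
  -- suppose wrapAngle α = -π
  intro hcon
  have hπ : (0:ℝ) < Real.pi := Real.pi_pos
  set k : ℤ := ⌊(α + Real.pi) / (2 * Real.pi)⌋ with hk
  have hαval : α = 2 * Real.pi * (k:ℝ) - Real.pi := by
    have h := hcon
    unfold wrapAngle at h
    rw [← hk] at h
    linarith
  -- exp(α i) = -1
  have hexp : Complex.exp (α * Complex.I) = -1 := by
    rw [hαval]
    have hsplit : ((2 * Real.pi * (k:ℝ) - Real.pi : ℝ) : ℂ) * Complex.I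
        = (k:ℤ) * (2 * Real.pi * Complex.I) + (-(Real.pi * Complex.I)) := by push_cast; ring
    rw [hsplit, Complex.exp_add, Complex.exp_int_mul_two_pi_mul_I, Complex.exp_neg,
      Complex.exp_pi_mul_I]
    norm_num
  -- exp(α i) = (A/|A|) / (B/|B|)
  have hAexp : (‖A‖ : ℂ) * Complex.exp (Complex.arg A * Complex.I) = A :=
    Complex.norm_mul_exp_arg_mul_I A
  have hBexp : (‖B‖ : ℂ) * Complex.exp (Complex.arg B * Complex.I) = B :=
    Complex.norm_mul_exp_arg_mul_I B
  have hαeq : α = Complex.arg A - Complex.arg B := by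
    simp [hα, atan2v, hA, hB]
  have hABexp : Complex.exp (α * Complex.I)
      = Complex.exp (Complex.arg A * Complex.I) / Complex.exp (Complex.arg B * Complex.I) := by
    rw [hαeq, ← Complex.exp_sub]
    push_cast
    ring_nf
  have habsA : (0:ℝ) < ‖A‖ := norm_pos_iff.mpr hA0
  have habsB : (0:ℝ) < ‖B‖ := norm_pos_iff.mpr hB0
  set t : ℝ := ‖A‖ / ‖B‖ with ht
  have ht0 : 0 < t := div_pos habsA habsB
  have hB' : ((‖B‖ : ℝ) : ℂ) ≠ 0 := by exact_mod_cast habsB.ne'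
  have h1 : Complex.exp (Complex.arg A * Complex.I)
      = - Complex.exp (Complex.arg B * Complex.I) := by
    have hexpB : Complex.exp (Complex.arg B * Complex.I) ≠ 0 := Complex.exp_ne_zero _
    have h := hABexp.symm.trans hexp
    field_simp at h
    rw [mul_comm Complex.I] at h
    linear_combination h
  have hexpBval : Complex.exp (Complex.arg B * Complex.I) = B / (‖B‖ : ℂ) := by
    rw [eq_div_iff hB', mul_comm]
    exact hBexp
  have hAB : A = ((-t : ℝ) : ℂ) * B := by
    rw [← hAexp, h1, hexpBval, ht]
    push_cast
    field_simp
  have hre : (xT - x').1 = -t * (xT - x).1 := by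
    have h := congrArg Complex.re hAB
    simpa [hA, hB, Complex.re_ofReal_mul] using h
  have him : (xT - x').2 = -t * (xT - x).2 := by
    have h := congrArg Complex.im hAB
    simpa [hA, hB, Complex.im_ofReal_mul] using h
  -- then xT = (t/(1+t)) x + (1/(1+t)) x' ∈ segment
  have h1t : (0:ℝ) < 1 + t := by linarith
  apply hseg xT _ rfl
  refine ⟨t / (1 + t), 1 / (1 + t), le_of_lt (div_pos ht0 h1t),
    le_of_lt (div_pos one_pos h1t), by field_simp; ring, ?_⟩
  have e1 : xT.1 - x'.1 = -t * (xT.1 - x.1) := by simpa using hre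
  have e2 : xT.2 - x'.2 = -t * (xT.2 - x.2) := by simpa using him
  ext
  · show t / (1 + t) * x.1 + 1 / (1 + t) * x'.1 = xT.1
    field_simp
    linarith [e1]
  · show t / (1 + t) * x.2 + 1 / (1 + t) * x'.2 = xT.2
    field_simp
    linarith [e2]
end

section
/- Let x₀, x_c, x_a ∈ ℝ² and let (x₀, …, x_e) be a polyline in ℝ², where lengths of polylines are sums of Euclidean segment lengths. If the straight-line polyline (x₀, x_c, x_a) has length strictly less than the polyline (x₀, …, x_e, x_a), then for every x_i on the segment [x_c, x_a], the polyline (x₀, x_c, x_i) has length strictly less than the polyline (x₀, …, x_e, x_i). -/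
/-- Length of a polyline given as a list of points. -/
noncomputable def polyLength : List (EuclideanSpace ℝ (Fin 2)) → ℝ
  | [] => 0
  | [_] => 0
  | a :: b :: l => dist a b + polyLength (b :: l)

lemma polyLength_append_singleton (L : List (EuclideanSpace ℝ (Fin 2))) (hL : L ≠ [])
    (x : EuclideanSpace ℝ (Fin 2)) :
    polyLength (L ++ [x]) = polyLength L + dist (L.getLast hL) x := by
  induction L with
  | nil => simp at hL
  | cons a l ih =>
    cases l with
    | nil => simp [polyLength]
    | cons b t =>
      have h : (b :: t : List (EuclideanSpace ℝ (Fin 2))) ≠ [] := by simp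
      have := ih h
      simp only [List.cons_append, polyLength, List.append_eq] at *
      rw [this]
      rw [List.getLast_cons h]
      ring

/-- Case 1.1 of R2+'s theorem on discarding expensive paths: if the polyline
`(x₀, x_c, x_a)` is strictly shorter than the polyline `L ++ [x_a]` (where `L` runs from
`x₀` to `x_e`), then for every `x_i` on the segment `[x_c, x_a]`, the polyline
`(x₀, x_c, x_i)` is strictly shorter than `L ++ [x_i]`. -/
theorem discard_expensive_path_on_segment (x₀ xc xa xe : EuclideanSpace ℝ (Fin 2))
    (L : List (EuclideanSpace ℝ (Fin 2))) (hL : L ≠ [])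
    (hhead : L.head hL = x₀) (hlast : L.getLast hL = xe)
    (hshorter : dist x₀ xc + dist xc xa < polyLength (L ++ [xa]))
    (xi : EuclideanSpace ℝ (Fin 2)) (hxi : xi ∈ segment ℝ xc xa) :
    dist x₀ xc + dist xc xi < polyLength (L ++ [xi]) := by
  rw [polyLength_append_singleton L hL, hlast] at *
  have hseg : dist xc xi + dist xi xa = dist xc xa :=
    ((mem_segment_iff_wbtw).1 hxi).dist_add_dist
  have htri : dist xe xa ≤ dist xe xi + dist xi xa := dist_triangle _ _ _
  linarith
end

section
/- Let σ ∈ {-1, 1} and let θ'_S ∈ ℝ satisfy πk ≤ σθ'_S < π(k+1) for some even integer k (source-pledge first-half constraint). Let ϑ_s, ϑ_ε ∈ ℝ satisfy -π ≤ σϑ_s ≤ 0, σ(θ'_S + ϑ_s) > πk, and -π < σϑ_ε < 0 (non-convex corner), and suppose the reversal condition π - (σθ'_S - πk + σϑ_s) ≤ -σϑ_ε holds. Then θ_S = θ'_S + ϑ_s - ϑ_ε satisfies π(k+1) ≤ σθ_S < π(k+2); i.e., the source-pledge winds into the next angular half-range. -/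
open Real in
/-- Corner case C4 of the source-pledge update table: at a non-convex corner causing angular
reversal, the source-pledge winds into the next angular half-range. -/
theorem source_pledge_C4 (σ θS' ϑs ϑε : ℝ) (k : ℤ) (hσ : σ = -1 ∨ σ = 1) (hk : Even k)
    (h1 : π * k ≤ σ * θS') (h2 : σ * θS' < π * (k + 1))
    (h3 : -π ≤ σ * ϑs) (h4 : σ * ϑs ≤ 0)
    (h5 : σ * (θS' + ϑs) > π * k)
    (h6 : -π < σ * ϑε) (h7 : σ * ϑε < 0)
    (h8 : π - (σ * θS' - π * k + σ * ϑs) ≤ -(σ * ϑε)) :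
    π * (k + 1) ≤ σ * (θS' + ϑs - ϑε) ∧ σ * (θS' + ϑs - ϑε) < π * (k + 2) := by
  rcases hσ with h | h <;> subst h <;>
    constructor <;> push_cast at * <;> nlinarith [Real.pi_pos]
end
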